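/- arXiv:1205.0615 — 6 statements merged into one kernel-verified Lean document; each statement's English description precedes it below -/
import Mathlib

section
/- Let f: ℤ_2 → ℤ_2 be 1-Lipschitz, r ≥ 1, and a ∈ ℤ_2. Then f maps the sphere S_{2^{-r}}(a) into itself if and only if f(a + 2^r) ≡ a + 2^r (mod 2^{r+1}). -/
private lemma two_pow_dvd_iff (n : ℕ) (x : ℤ_[2]) :
    (2 : ℤ_[2]) ^ n ∣ x ↔ ‖x‖ ≤ (2 : ℝ) ^ (-(n : ℤ)) := by
  rw [show ((2:ℤ_[2])) = ((2:ℕ):ℤ_[2]) by norm_num,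
      show ((2:ℝ)) = ((2:ℕ):ℝ) by norm_num,
      ← Ideal.mem_span_singleton, ← PadicInt.norm_le_pow_iff_mem_span_pow]

private lemma dvd_of_norm_eq (r : ℕ) (x : ℤ_[2]) (hx : ‖x‖ = (2 : ℝ) ^ (-(r : ℤ))) :
    (2 : ℤ_[2]) ^ (r + 1) ∣ x - 2 ^ r := by
  have h1 : (2 : ℤ_[2]) ^ r ∣ x := (two_pow_dvd_iff r x).2 (le_of_eq hx)
  obtain ⟨u, rfl⟩ := h1
  have h2 : ‖(2 : ℤ_[2]) ^ r‖ = (2 : ℝ) ^ (-(r : ℤ)) := by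
    simpa using PadicInt.norm_p_pow (p := 2) r
  have hu : ‖u‖ = 1 := by
    rw [norm_mul, h2] at hx
    have h0 : ((2 : ℝ) ^ (-(r : ℤ))) ≠ 0 := by positivity
    field_simp at hx
    exact hx
  have hu2 : ¬ (2 : ℤ_[2]) ∣ u := by
    intro h
    have := (two_pow_dvd_iff 1 u).1 (by simpa using h)
    rw [hu] at this
    norm_num at this
  have h3 : (2 : ℤ_[2]) ∣ u - 1 := by
    have hne : PadicInt.toZMod u ≠ 0 := by
      intro h
      apply hu2
      have hmem : u ∈ RingHom.ker (PadicInt.toZMod (p := 2)) := h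
      rw [PadicInt.ker_toZMod, PadicInt.maximalIdeal_eq_span_p,
        Ideal.mem_span_singleton] at hmem
      exact_mod_cast hmem
    have h1' : PadicInt.toZMod u = 1 := by
      have : ∀ x : ZMod 2, x ≠ 0 → x = 1 := by decide
      exact this _ hne
    have h4 : PadicInt.toZMod (u - 1) = 0 := by simp [map_sub, h1']
    have hmem : u - 1 ∈ RingHom.ker (PadicInt.toZMod (p := 2)) := h4
    rw [PadicInt.ker_toZMod, PadicInt.maximalIdeal_eq_span_p,
      Ideal.mem_span_singleton] at hmem
    exact_mod_cast hmem
  obtain ⟨v, hv⟩ := h3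
  exact ⟨v, by rw [pow_succ, mul_assoc, ← hv]; ring⟩

theorem sphere_invariant_iff (f : ℤ_[2] → ℤ_[2])
    (hf : ∀ x y : ℤ_[2], ‖f x - f y‖ ≤ ‖x - y‖) (r : ℕ) (hr : 1 ≤ r) (a : ℤ_[2]) :
    Set.MapsTo f {z : ℤ_[2] | ‖z - a‖ = (2 : ℝ) ^ (-(r : ℤ))}
        {z : ℤ_[2] | ‖z - a‖ = (2 : ℝ) ^ (-(r : ℤ))} ↔
      (2 : ℤ_[2]) ^ (r + 1) ∣ f (a + 2 ^ r) - (a + 2 ^ r) := by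
  have hnorm2r : ‖(2 : ℤ_[2]) ^ r‖ = (2 : ℝ) ^ (-(r : ℤ)) := by
    simpa using PadicInt.norm_p_pow (p := 2) r
  have hb : (a + 2 ^ r) ∈ {z : ℤ_[2] | ‖z - a‖ = (2 : ℝ) ^ (-(r : ℤ))} := by
    simpa using hnorm2r
  constructor
  · intro hmaps
    have hfb := hmaps hb
    have := dvd_of_norm_eq r (f (a + 2 ^ r) - a) hfb
    simpa [sub_sub] using this
  · intro hdvd z hz
    set b := a + 2 ^ r with hbdef
    have hzb : (2 : ℤ_[2]) ^ (r + 1) ∣ z - b := by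
      have := dvd_of_norm_eq r (z - a) hz
      simpa [hbdef, sub_sub] using this
    have h1 : ‖f z - f b‖ ≤ (2 : ℝ) ^ (-((r : ℤ) + 1)) :=
      le_trans (hf z b) (by simpa using (two_pow_dvd_iff (r + 1) (z - b)).1 hzb)
    have h2 : ‖f b - b‖ ≤ (2 : ℝ) ^ (-((r : ℤ) + 1)) := by
      simpa using (two_pow_dvd_iff (r + 1) (f b - b)).1 hdvd
    have hsmall : ‖(f z - f b) + (f b - b)‖ < (2 : ℝ) ^ (-(r : ℤ)) := by
      calc ‖(f z - f b) + (f b - b)‖ ≤ max ‖f z - f b‖ ‖f b - b‖ :=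
            PadicInt.nonarchimedean _ _
        _ ≤ (2 : ℝ) ^ (-((r : ℤ) + 1)) := max_le h1 h2
        _ < (2 : ℝ) ^ (-(r : ℤ)) := by
            apply zpow_lt_zpow_right₀ (by norm_num)
            omega
    show ‖f z - a‖ = (2 : ℝ) ^ (-(r : ℤ))
    have key : f z - a = ((f z - f b) + (f b - b)) + (b - a) := by ring
    have hba : ‖b - a‖ = (2 : ℝ) ^ (-(r : ℤ)) := by simpa [hbdef] using hnorm2r
    rw [key, PadicInt.norm_add_eq_max_of_ne (by rw [hba]; exact ne_of_lt hsmall),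
      max_eq_right (by rw [hba]; exact le_of_lt hsmall), hba]
end

section
/- A 1-Lipschitz transformation f: ℤ_p → ℤ_p preserves the Haar measure μ_p if and only if for every k ≥ 1 the induced map f mod p^k on ℤ/p^kℤ is a bijection. -/
open MeasureTheory ProbabilityTheory

noncomputable instance (p : ℕ) [Fact p.Prime] : MeasurableSpace ℤ_[p] := borel _
instance (p : ℕ) [Fact p.Prime] : BorelSpace ℤ_[p] := ⟨rfl⟩

namespace MPaux

variable {p : ℕ} [hp : Fact p.Prime]

/-- The coset of `a mod p^k` inside `ℤ_[p]`. -/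
def S (p : ℕ) [Fact p.Prime] (k : ℕ) (a : ZMod (p ^ k)) : Set ℤ_[p] :=
  (PadicInt.toZModPow k) ⁻¹' {a}

lemma key (k : ℕ) (x y : ℤ_[p]) :
    PadicInt.toZModPow k x = PadicInt.toZModPow k y ↔ ‖x - y‖ ≤ (p : ℝ) ^ (-(k : ℤ)) := by
  rw [PadicInt.norm_le_pow_iff_mem_span_pow, ← PadicInt.ker_toZModPow, RingHom.mem_ker,
    map_sub, sub_eq_zero]

instance instNeZeroPow (k : ℕ) : NeZero (p ^ k) :=
  ⟨pow_ne_zero k hp.out.ne_zero⟩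

lemma toZModPow_natCast_val (k : ℕ) (a : ZMod (p ^ k)) :
    PadicInt.toZModPow k ((a.val : ℕ) : ℤ_[p]) = a := by
  rw [map_natCast, ZMod.natCast_zmod_val]

lemma S_eq_closedBall (k : ℕ) (a : ZMod (p ^ k)) :
    S p k a = Metric.closedBall ((a.val : ℕ) : ℤ_[p]) ((p : ℝ) ^ (-(k : ℤ))) := by
  ext y
  rw [Metric.mem_closedBall, dist_eq_norm, ← key k y ((a.val : ℕ) : ℤ_[p]),
    toZModPow_natCast_val]
  exact Iff.rfl

lemma measurableSet_S (k : ℕ) (a : ZMod (p ^ k)) : MeasurableSet (S p k a) := by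
  rw [S_eq_closedBall]; exact measurableSet_closedBall

lemma isOpen_S (k : ℕ) (a : ZMod (p ^ k)) : IsOpen (S p k a) := by
  rw [Metric.isOpen_iff]
  intro x hx
  refine ⟨(p : ℝ) ^ (-(k : ℤ)), zpow_pos (by exact_mod_cast hp.out.pos) _, fun y hy => ?_⟩
  simp only [S, Set.mem_preimage, Set.mem_singleton_iff] at hx ⊢
  rw [← hx]
  exact (key k y x).mpr (le_of_lt (by rwa [Metric.mem_ball, dist_eq_norm] at hy))

lemma mem_S_self (k : ℕ) (x : ℤ_[p]) : x ∈ S p k (PadicInt.toZModPow k x) := rfl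

lemma S_subset_closedBall (k : ℕ) (x : ℤ_[p]) :
    S p k (PadicInt.toZModPow k x) ⊆ Metric.closedBall x ((p : ℝ) ^ (-(k : ℤ))) := by
  intro y hy
  rw [Metric.mem_closedBall, dist_eq_norm]
  exact (key k y x).mp hy

lemma toZModPow_eq_of_le {k m : ℕ} (h : k ≤ m) {x y : ℤ_[p]}
    (hxy : PadicInt.toZModPow m x = PadicInt.toZModPow m y) :
    PadicInt.toZModPow k x = PadicInt.toZModPow k y := by
  have := PadicInt.zmod_cast_comp_toZModPow (p := p) k m h
  calc PadicInt.toZModPow k x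
      = (ZMod.castHom (pow_dvd_pow p h) (ZMod (p ^ k))).comp (PadicInt.toZModPow m) x := by
        rw [this]
    _ = (ZMod.castHom (pow_dvd_pow p h) (ZMod (p ^ k))).comp (PadicInt.toZModPow m) y := by
        simp only [RingHom.coe_comp, Function.comp_apply, hxy]
    _ = PadicInt.toZModPow k y := by rw [this]

lemma S_disjoint (k : ℕ) {a b : ZMod (p ^ k)} (hab : a ≠ b) : Disjoint (S p k a) (S p k b) :=
  Disjoint.preimage _ (by simpa using hab)

lemma measure_S {μ : Measure ℤ_[p]} (hμ : μ.IsAddHaarMeasure) (hμ1 : IsProbabilityMeasure μ)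
    (k : ℕ) (a : ZMod (p ^ k)) : μ (S p k a) = ((p : ENNReal) ^ k)⁻¹ := by
  have hconst : ∀ b : ZMod (p ^ k), μ (S p k b) = μ (S p k 0) := by
    intro b
    have hpre : S p k b = (fun y => (((-b).val : ℕ) : ℤ_[p]) + y) ⁻¹' (S p k 0) := by
      ext y
      simp only [S, Set.mem_preimage, Set.mem_singleton_iff, map_add, toZModPow_natCast_val]
      rw [neg_add_eq_zero]
      exact comm
    rw [hpre, measure_preimage_add]
  have hunion : (⋃ b : ZMod (p ^ k), S p k b) = Set.univ := by
    ext x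
    simp only [Set.mem_iUnion, Set.mem_univ, iff_true]
    exact ⟨PadicInt.toZModPow k x, mem_S_self k x⟩
  have hsum : μ (⋃ b : ZMod (p ^ k), S p k b) = ∑' b : ZMod (p ^ k), μ (S p k b) :=
    measure_iUnion (fun a b hab => S_disjoint k hab) (fun b => measurableSet_S k b)
  rw [hunion, measure_univ, tsum_fintype] at hsum
  have hcard : (Finset.univ.sum fun b : ZMod (p ^ k) => μ (S p k b))
      = (p ^ k : ℕ) * μ (S p k 0) := by
    rw [Finset.sum_congr rfl (fun b _ => hconst b), Finset.sum_const, Finset.card_univ,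
      ZMod.card, nsmul_eq_mul]
  rw [hcard] at hsum
  have hp0 : ((p : ENNReal) ^ k) ≠ 0 := by
    simp [hp.out.ne_zero]
  have hpt : ((p : ENNReal) ^ k) ≠ ⊤ := by
    simp [ENNReal.pow_ne_top, ENNReal.natCast_ne_top]
  have : ((p : ENNReal) ^ k) * μ (S p k 0) = 1 := by
    rw [← Nat.cast_pow, ← hsum]
  calc μ (S p k a) = μ (S p k 0) := hconst a
    _ = ((p : ENNReal) ^ k)⁻¹ * (((p : ENNReal) ^ k) * μ (S p k 0)) := by
        rw [← mul_assoc, ENNReal.inv_mul_cancel hp0 hpt, one_mul]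
    _ = ((p : ENNReal) ^ k)⁻¹ := by rw [this, mul_one]


lemma toZModPow_f_eq (f : ℤ_[p] → ℤ_[p]) (hf : ∀ x y : ℤ_[p], ‖f x - f y‖ ≤ ‖x - y‖)
    (k : ℕ) (x : ℤ_[p]) :
    PadicInt.toZModPow k (f x)
      = PadicInt.toZModPow k (f (((PadicInt.toZModPow k x).val : ℕ) : ℤ_[p])) := by
  apply (key k _ _).mpr
  exact le_trans (hf _ _) ((key k _ _).mp (toZModPow_natCast_val k _).symm)

lemma mem_S_iff (k : ℕ) (a : ZMod (p ^ k)) (x : ℤ_[p]) :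
    x ∈ S p k a ↔ PadicInt.toZModPow k x = a := Iff.rfl

end MPaux

open MPaux

theorem measurePreserving_iff_bijective_mod (p : ℕ) [Fact p.Prime]
    (μ : Measure ℤ_[p]) (hμ : μ.IsAddHaarMeasure) (hμ1 : IsProbabilityMeasure μ)
    (f : ℤ_[p] → ℤ_[p]) (hf : ∀ x y : ℤ_[p], ‖f x - f y‖ ≤ ‖x - y‖) :
    MeasurePreserving f μ μ ↔
      ∀ k : ℕ, 1 ≤ k →
        Function.Bijective
          (fun z : ZMod (p ^ k) => PadicInt.toZModPow k (f ((z.val : ℕ) : ℤ_[p]))) := by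
  have hp : Fact p.Prime := ‹_›
  have hmeas : Measurable f := by
    have hlip : LipschitzWith 1 f := by
      apply LipschitzWith.of_dist_le_mul
      intro x y
      rw [dist_eq_norm, dist_eq_norm, NNReal.coe_one, one_mul]
      exact hf x y
    exact hlip.continuous.measurable
  constructor
  · intro hmp k hk
    rw [← Finite.injective_iff_bijective]
    intro b1 b2 hb
    by_contra hne
    simp only at hb
    set a : ZMod (p ^ k) := PadicInt.toZModPow k (f ((b1.val : ℕ) : ℤ_[p])) with ha
    have hsub : S p k b1 ∪ S p k b2 ⊆ f ⁻¹' S p k a := by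
      rintro x (hx | hx) <;> rw [mem_S_iff] at hx <;>
        simp only [Set.mem_preimage, mem_S_iff]
      · rw [toZModPow_f_eq f hf k x, hx]
      · rw [toZModPow_f_eq f hf k x, hx]
        exact hb.symm
    have h1 : μ (S p k b1 ∪ S p k b2) = ((p : ENNReal) ^ k)⁻¹ + ((p : ENNReal) ^ k)⁻¹ := by
      rw [measure_union (S_disjoint k hne) (measurableSet_S k b2), measure_S hμ hμ1,
        measure_S hμ hμ1]
    have h2 : μ (f ⁻¹' S p k a) = ((p : ENNReal) ^ k)⁻¹ := by
      rw [hmp.measure_preimage (measurableSet_S k a).nullMeasurableSet, measure_S hμ hμ1]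
    have h3 := (measure_mono hsub).trans_eq h2
    rw [h1] at h3
    have hp0 : ((p : ENNReal) ^ k) ≠ 0 := by simp [hp.out.ne_zero]
    have hinvt : ((p : ENNReal) ^ k)⁻¹ ≠ ⊤ := ENNReal.inv_ne_top.mpr hp0
    have hinv0 : ((p : ENNReal) ^ k)⁻¹ ≠ 0 := by
      simp [ENNReal.pow_ne_top, ENNReal.natCast_ne_top]
    nth_rewrite 3 [← add_zero (((p : ENNReal) ^ k)⁻¹)] at h3
    rw [ENNReal.add_le_add_iff_left hinvt, le_zero_iff] at h3
    exact hinv0 h3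
  · intro hbij
    refine ⟨hmeas, ?_⟩
    set C : Set (Set ℤ_[p]) := {s | ∃ k : ℕ, 1 ≤ k ∧ ∃ a : ZMod (p ^ k), s = S p k a} with hC
    have hbasis : TopologicalSpace.IsTopologicalBasis C := by
      apply TopologicalSpace.isTopologicalBasis_of_isOpen_of_nhds
      · rintro u ⟨k, _, a, rfl⟩
        exact isOpen_S k a
      · intro x u hxu hu
        obtain ⟨ε, hε, hball⟩ := Metric.isOpen_iff.mp hu x hxu
        obtain ⟨n, hn⟩ := PadicInt.exists_pow_neg_lt p hε
        set k := max n 1 with hkdef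
        refine ⟨S p k (PadicInt.toZModPow k x), ⟨k, le_max_right n 1, _, rfl⟩,
          mem_S_self k x, ?_⟩
        have hle : (p : ℝ) ^ (-(k : ℤ)) < ε := by
          refine lt_of_le_of_lt ?_ hn
          have h1p : (1 : ℝ) ≤ (p : ℝ) := by exact_mod_cast hp.out.one_lt.le
          have : (-(k : ℤ)) ≤ (-(n : ℤ)) := by
            simp only [neg_le_neg_iff]
            exact_mod_cast le_max_left n 1
          exact zpow_le_zpow_right₀ h1p this
        exact (S_subset_closedBall k x).trans
          ((Metric.closedBall_subset_ball hle).trans hball)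
    have hgen : (inferInstance : MeasurableSpace ℤ_[p]) = .generateFrom C :=
      BorelSpace.measurable_eq.trans hbasis.borel_eq_generateFrom
    have hpi : IsPiSystem C := by
      rintro s ⟨k, hk, a, rfl⟩ t ⟨m, hm, b, rfl⟩ hst
      obtain ⟨x, hxa, hxb⟩ := hst
      rw [mem_S_iff] at hxa hxb
      rcases le_total k m with h | h
      · have heq : S p k a ∩ S p m b = S p m b := by
          rw [Set.inter_eq_right]
          intro y hy
          rw [mem_S_iff] at hy ⊢
          exact (toZModPow_eq_of_le h (hy.trans hxb.symm)).trans hxa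
        rw [heq]
        exact ⟨m, hm, b, rfl⟩
      · have heq : S p k a ∩ S p m b = S p k a := by
          rw [Set.inter_eq_left]
          intro y hy
          rw [mem_S_iff] at hy ⊢
          exact (toZModPow_eq_of_le h (hy.trans hxa.symm)).trans hxb
        rw [heq]
        exact ⟨k, hk, a, rfl⟩
    haveI : IsProbabilityMeasure (μ.map f) := Measure.isProbabilityMeasure_map hmeas.aemeasurable
    refine ext_of_generate_finite C hgen hpi ?_ (by simp)
    rintro s ⟨k, hk, a, rfl⟩
    obtain ⟨b, hb⟩ := (hbij k hk).surjective a
    simp only at hb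
    have hpre : f ⁻¹' S p k a = S p k b := by
      ext x
      simp only [Set.mem_preimage, mem_S_iff]
      rw [toZModPow_f_eq f hf k x]
      constructor
      · intro h
        exact (hbij k hk).injective (h.trans hb.symm)
      · intro h
        rw [h]
        exact hb
    rw [Measure.map_apply hmeas (measurableSet_S k a), hpre, measure_S hμ hμ1,
      measure_S hμ hμ1]
end

section
/- A 1-Lipschitz transformation f: ℤ_p → ℤ_p is ergodic with respect to the Haar measure μ_p if and only if for every k ≥ 1 the induced map f mod p^k on ℤ/p^kℤ is a cyclic permutation of length p^k (i.e., transitive on ℤ/p^kℤ). -/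
/-!
Reduction mod `p ^ k` semiconjugates a 1-Lipschitz `f` to `f mod p ^ k`, and its fibres, the
cylinders, form a generating π-system of sets of equal Haar measure.

If `f` is ergodic, the preimage of an orbit of `f mod p ^ k` is a forward-invariant set
containing a cylinder, so it has full measure and therefore meets every cylinder: the orbit is
everything. Conversely, if every `f mod p ^ k` is transitive, then it is bijective, so `f` maps
preimages of cylinders to cylinders and preserves `μ`; moreover any finite `f`-invariant measure
gives the same mass to all cylinders of a given level and hence is a multiple of `μ` (`f` is
uniquely ergodic). For an invariant set `s` this applies to `μ.restrict s`, which makes `s`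
independent of itself, so `μ s ∈ {0, 1}`.
-/

open MeasureTheory ProbabilityTheory

open Set Function Metric TopologicalSpace
open scoped ENNReal

theorem Function.bijective_of_forall_exists_iterate_eq {α : Type*} [Finite α] {g : α → α}
    (h : ∀ x y, ∃ n, g^[n] x = y) : Bijective g := by
  refine Finite.surjective_iff_bijective.1 fun y => ?_
  obtain ⟨n, hn⟩ := h (g y) y
  exact ⟨g^[n] y, by rwa [← iterate_succ_apply' g n y, iterate_succ_apply]⟩

namespace PadicInt

variable {p : ℕ} [Fact p.Prime]

theorem toZModPow_eq_iff_norm_sub_le {k : ℕ} {x y : ℤ_[p]} :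
    toZModPow k x = toZModPow k y ↔ ‖x - y‖ ≤ (p : ℝ)⁻¹ ^ k := by
  rw [← sub_eq_zero, ← map_sub, ← RingHom.mem_ker, ker_toZModPow, ← norm_le_pow_iff_mem_span_pow,
    zpow_neg, zpow_natCast, inv_pow]

theorem preimage_toZModPow_singleton (k : ℕ) (x : ℤ_[p]) :
    toZModPow k ⁻¹' {toZModPow k x} = closedBall x ((p : ℝ)⁻¹ ^ k) := by
  ext y
  exact toZModPow_eq_iff_norm_sub_le

theorem preimage_toZModPow_singleton_subset_of_le {k m : ℕ} (hkm : k ≤ m) (x : ℤ_[p]) :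
    toZModPow m ⁻¹' {toZModPow m x} ⊆ toZModPow k ⁻¹' {toZModPow k x} := by
  intro y hy
  rw [mem_preimage, ← cast_toZModPow k m hkm y, ← cast_toZModPow k m hkm x,
    mem_singleton_iff.1 hy]
  rfl

theorem toZModPow_natCast_val {k : ℕ} (a : ZMod (p ^ k)) : toZModPow k (a.val : ℤ_[p]) = a := by
  rw [map_natCast, ZMod.natCast_zmod_val]

theorem continuous_toZModPow (k : ℕ) : Continuous (toZModPow k : ℤ_[p] → ZMod (p ^ k)) := by
  refine continuous_discrete_rng.2 fun a => ?_
  rw [← toZModPow_natCast_val a, preimage_toZModPow_singleton]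
  exact IsUltrametricDist.isOpen_closedBall _ (by simp [(Fact.out : p.Prime).ne_zero])

theorem measurableSet_preimage_toZModPow (k : ℕ) (s : Set (ZMod (p ^ k))) :
    MeasurableSet (toZModPow k ⁻¹' s : Set ℤ_[p]) :=
  (continuous_toZModPow k).measurable (.of_discrete)

variable (p) in
def cylinders : Set (Set ℤ_[p]) :=
  {s | ∃ (k : ℕ) (a : ZMod (p ^ k)), toZModPow k ⁻¹' {a} = s}

theorem isPiSystem_cylinders : IsPiSystem (cylinders p) := by
  rintro _ ⟨k, _, rfl⟩ _ ⟨m, _, rfl⟩ ⟨x, rfl, hxm⟩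
  rw [mem_preimage, mem_singleton_iff] at hxm
  subst hxm
  rcases le_total k m with h | h
  · exact ⟨m, _, (inter_eq_right.2 (preimage_toZModPow_singleton_subset_of_le h x)).symm⟩
  · exact ⟨k, _, (inter_eq_left.2 (preimage_toZModPow_singleton_subset_of_le h x)).symm⟩

theorem isTopologicalBasis_cylinders : IsTopologicalBasis (cylinders p) := by
  have hp : (1 : ℝ) < p := by exact_mod_cast (Fact.out : p.Prime).one_lt
  refine isTopologicalBasis_of_isOpen_of_nhds ?_ fun x u hxu hu => ?_
  · rintro _ ⟨k, a, rfl⟩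
    exact isOpen_discrete {a} |>.preimage (continuous_toZModPow k)
  · obtain ⟨k, -, hk⟩ := (nhds_basis_closedBall_pow (x := x) (by positivity)
      (inv_lt_one_of_one_lt₀ hp)).mem_iff.1 (hu.mem_nhds hxu)
    refine ⟨_, ⟨k, toZModPow k x, rfl⟩, rfl, ?_⟩
    rwa [preimage_toZModPow_singleton]

theorem measurableSpace_eq_generateFrom_cylinders :
    (inferInstance : MeasurableSpace ℤ_[p]) = MeasurableSpace.generateFrom (cylinders p) :=
  isTopologicalBasis_cylinders.borel_eq_generateFrom

section Measure

variable (μ : Measure ℤ_[p])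

theorem measure_preimage_toZModPow_singleton_ne_zero [μ.IsOpenPosMeasure] (k : ℕ)
    (a : ZMod (p ^ k)) : μ (toZModPow k ⁻¹' {a}) ≠ 0 :=
  (isOpen_discrete {a} |>.preimage (continuous_toZModPow k)).measure_ne_zero μ
    ⟨_, toZModPow_natCast_val a⟩

theorem measure_preimage_toZModPow_singleton_eq [μ.IsAddLeftInvariant] (k : ℕ)
    (a b : ZMod (p ^ k)) : μ (toZModPow k ⁻¹' {a}) = μ (toZModPow k ⁻¹' {b}) := by
  have htranslate : (fun x => ((a - b).val : ℤ_[p]) + x) ⁻¹' (toZModPow k ⁻¹' {a}) =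
      toZModPow k ⁻¹' {b} := by
    ext x
    simp [add_comm (a - b), ← eq_sub_iff_add_eq]
  rw [← htranslate, measure_preimage_add]

theorem pow_mul_measure_preimage_toZModPow_singleton {k : ℕ}
    (h : ∀ a b : ZMod (p ^ k), μ (toZModPow k ⁻¹' {a}) = μ (toZModPow k ⁻¹' {b}))
    (a : ZMod (p ^ k)) : (p : ℝ≥0∞) ^ k * μ (toZModPow k ⁻¹' {a}) = μ univ := by
  rw [← preimage_univ (f := toZModPow k), ← Finset.coe_univ,
    ← sum_measure_preimage_singleton _ fun b _ => measurableSet_preimage_toZModPow k {b},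
    Finset.sum_congr rfl fun b _ => h b a, Finset.sum_const, Finset.card_univ, ZMod.card,
    nsmul_eq_mul, Nat.cast_pow]

theorem eq_smul_of_measure_preimage_toZModPow_singleton_eq [IsProbabilityMeasure μ]
    [μ.IsAddLeftInvariant] (ν : Measure ℤ_[p]) [IsFiniteMeasure ν]
    (h : ∀ (k : ℕ) (a b : ZMod (p ^ k)), ν (toZModPow k ⁻¹' {a}) = ν (toZModPow k ⁻¹' {b})) :
    ν = ν univ • μ := by
  refine ext_of_generate_finite _ measurableSpace_eq_generateFrom_cylinders isPiSystem_cylinders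
    ?_ (by simp)
  rintro _ ⟨k, a, rfl⟩
  calc ν (toZModPow k ⁻¹' {a})
      = ν (toZModPow k ⁻¹' {a}) * ((p : ℝ≥0∞) ^ k * μ (toZModPow k ⁻¹' {a})) := by
        rw [pow_mul_measure_preimage_toZModPow_singleton μ
          (measure_preimage_toZModPow_singleton_eq μ k), measure_univ, mul_one]
    _ = ν univ * μ (toZModPow k ⁻¹' {a}) := by
        rw [← pow_mul_measure_preimage_toZModPow_singleton ν (h k) a, mul_left_comm, mul_assoc]
    _ = (ν univ • μ) (toZModPow k ⁻¹' {a}) := rfl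

end Measure

/-- `f mod p ^ k`, evaluated on the canonical lifts `0 ≤ z < p ^ k`; for 1-Lipschitz `f` the
choice of lift does not matter (`semiconj_toZModPow_reductionModPow`). -/
noncomputable def reductionModPow (f : ℤ_[p] → ℤ_[p]) (k : ℕ) : ZMod (p ^ k) → ZMod (p ^ k) :=
  fun z => toZModPow k (f (z.val : ℤ_[p]))

section Dynamics

variable {f : ℤ_[p] → ℤ_[p]}

theorem semiconj_toZModPow_reductionModPow (hf : ∀ x y : ℤ_[p], ‖f x - f y‖ ≤ ‖x - y‖)
    (k : ℕ) : Semiconj (toZModPow k) f (reductionModPow f k) := by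
  intro x
  have hx : toZModPow k x = toZModPow k ((toZModPow k x).val : ℤ_[p]) :=
    (toZModPow_natCast_val _).symm
  exact toZModPow_eq_iff_norm_sub_le.2 ((hf _ _).trans (toZModPow_eq_iff_norm_sub_le.1 hx))

theorem preimage_preimage_toZModPow (hf : ∀ x y : ℤ_[p], ‖f x - f y‖ ≤ ‖x - y‖) (k : ℕ)
    (s : Set (ZMod (p ^ k))) :
    f ⁻¹' (toZModPow k ⁻¹' s) = toZModPow k ⁻¹' (reductionModPow f k ⁻¹' s) := by
  rw [← preimage_comp, (semiconj_toZModPow_reductionModPow hf k).comp_eq, preimage_comp]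

theorem preimage_preimage_toZModPow_singleton_reductionModPow
    (hf : ∀ x y : ℤ_[p], ‖f x - f y‖ ≤ ‖x - y‖) {k : ℕ} (hinj : Injective (reductionModPow f k))
    (a : ZMod (p ^ k)) :
    f ⁻¹' (toZModPow k ⁻¹' {reductionModPow f k a}) = toZModPow k ⁻¹' {a} := by
  rw [preimage_preimage_toZModPow hf, ← image_singleton, hinj.preimage_image]

theorem exists_iterate_reductionModPow_eq_of_ergodic
    (hf : ∀ x y : ℤ_[p], ‖f x - f y‖ ≤ ‖x - y‖) {μ : Measure ℤ_[p]} [IsFiniteMeasure μ]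
    [μ.IsOpenPosMeasure] (hE : Ergodic f μ) (k : ℕ) (x y : ZMod (p ^ k)) :
    ∃ n, (reductionModPow f k)^[n] x = y := by
  set orbit := {z | ∃ n, (reductionModPow f k)^[n] x = z}
  have h_inv : toZModPow k ⁻¹' orbit ⊆ f ⁻¹' (toZModPow k ⁻¹' orbit) := by
    rw [preimage_preimage_toZModPow hf]
    exact preimage_mono fun _ ⟨n, hn⟩ => ⟨n + 1, by rw [iterate_succ_apply', hn]⟩
  rcases hE.ae_empty_or_univ_of_ae_le_preimage
    (measurableSet_preimage_toZModPow k orbit).nullMeasurableSet h_inv.eventuallyLE with h | h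
  · have hx : toZModPow k ⁻¹' {x} ⊆ toZModPow k ⁻¹' orbit :=
      preimage_mono (singleton_subset_iff.2 ⟨0, rfl⟩)
    exact absurd (measure_mono_null hx (ae_eq_empty.1 h))
      (measure_preimage_toZModPow_singleton_ne_zero μ k x)
  · by_contra hy
    have hy' : toZModPow k ⁻¹' {y} ⊆ (toZModPow k ⁻¹' orbit)ᶜ :=
      fun z hz hz' => hy (mem_singleton_iff.1 hz ▸ hz')
    exact measure_preimage_toZModPow_singleton_ne_zero μ k y
      (measure_mono_null hy' (ae_eq_univ.1 h))

variable (μ : Measure ℤ_[p]) [IsProbabilityMeasure μ] [μ.IsAddLeftInvariant]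

theorem measurePreserving_of_bijective_reductionModPow
    (hf : ∀ x y : ℤ_[p], ‖f x - f y‖ ≤ ‖x - y‖) (hbij : ∀ k, Bijective (reductionModPow f k)) :
    MeasurePreserving f μ μ := by
  have hmeas : Measurable f := (LipschitzWith.of_dist_le_mul fun x y => by
    simpa [dist_eq_norm] using hf x y : LipschitzWith 1 f).continuous.measurable
  refine ⟨hmeas, ?_⟩
  have h := eq_smul_of_measure_preimage_toZModPow_singleton_eq μ (μ.map f) fun k a b => ?_
  · rw [h, Measure.map_apply hmeas .univ, preimage_univ, measure_univ, one_smul]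
  obtain ⟨a, rfl⟩ := (hbij k).surjective a
  obtain ⟨b, rfl⟩ := (hbij k).surjective b
  rw [Measure.map_apply hmeas (measurableSet_preimage_toZModPow k _),
    Measure.map_apply hmeas (measurableSet_preimage_toZModPow k _),
    preimage_preimage_toZModPow_singleton_reductionModPow hf (hbij k).injective,
    preimage_preimage_toZModPow_singleton_reductionModPow hf (hbij k).injective]
  exact measure_preimage_toZModPow_singleton_eq μ k a b

theorem eq_smul_of_measurePreserving (hf : ∀ x y : ℤ_[p], ‖f x - f y‖ ≤ ‖x - y‖)
    (htrans : ∀ (k : ℕ) (x y : ZMod (p ^ k)), ∃ n, (reductionModPow f k)^[n] x = y)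
    {ν : Measure ℤ_[p]} [IsFiniteMeasure ν] (hν : MeasurePreserving f ν ν) :
    ν = ν univ • μ := by
  refine eq_smul_of_measure_preimage_toZModPow_singleton_eq μ ν fun k a b => ?_
  have hinj := (bijective_of_forall_exists_iterate_eq (htrans k)).injective
  have h_inv : (fun c => ν (toZModPow k ⁻¹' {c})) ∘ reductionModPow f k =
      fun c => ν (toZModPow k ⁻¹' {c}) := by
    funext c
    rw [comp_apply, ← preimage_preimage_toZModPow_singleton_reductionModPow hf hinj c,
      hν.measure_preimage (measurableSet_preimage_toZModPow k _).nullMeasurableSet]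
  obtain ⟨n, rfl⟩ := htrans k a b
  exact (congrFun (iterate_invariant h_inv n) a).symm

theorem ergodic_of_forall_exists_iterate_reductionModPow_eq
    (hf : ∀ x y : ℤ_[p], ‖f x - f y‖ ≤ ‖x - y‖)
    (htrans : ∀ (k : ℕ) (x y : ZMod (p ^ k)), ∃ n, (reductionModPow f k)^[n] x = y) :
    Ergodic f μ := by
  have hmp := measurePreserving_of_bijective_reductionModPow μ hf
    fun k => bijective_of_forall_exists_iterate_eq (htrans k)
  refine ⟨hmp, ⟨fun s hs hfs => ?_⟩⟩
  have hrestrict : μ.restrict s = μ s • μ := by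
    have h := eq_smul_of_measurePreserving μ hf htrans (ν := μ.restrict s)
      (by simpa only [hfs] using hmp.restrict_preimage hs)
    rwa [Measure.restrict_apply_univ] at h
  have hindep : IndepSet s s μ :=
    (indepSet_iff_measure_inter_eq_mul hs hs μ).2 (by simpa [hs] using congr($hrestrict s))
  rw [Filter.eventuallyConst_set']
  rcases measure_eq_zero_or_one_of_indepSet_self hindep with h | h
  · exact .inl (ae_eq_empty.2 h)
  · exact .inr ((ae_eq_univ_iff_measure_eq hs.nullMeasurableSet).2 (h.trans measure_univ.symm))

end Dynamics

end PadicInt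

open PadicInt in
theorem ergodic_iff_transitive_mod (p : ℕ) [Fact p.Prime]
    (μ : Measure ℤ_[p]) (hμ : μ.IsAddHaarMeasure) (hμ1 : IsProbabilityMeasure μ)
    (f : ℤ_[p] → ℤ_[p]) (hf : ∀ x y : ℤ_[p], ‖f x - f y‖ ≤ ‖x - y‖) :
    Ergodic f μ ↔
      ∀ k : ℕ, 1 ≤ k →
        ∀ x y : ZMod (p ^ k), ∃ n : ℕ,
          (fun z : ZMod (p ^ k) => PadicInt.toZModPow k (f ((z.val : ℕ) : ℤ_[p])))^[n] x = y := by
  refine ⟨fun hE k _ => exists_iterate_reductionModPow_eq_of_ergodic hf hE k, fun htrans => ?_⟩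
  refine ergodic_of_forall_exists_iterate_reductionModPow_eq μ hf fun k => ?_
  rcases k.eq_zero_or_pos with rfl | hk
  · exact fun x y => ⟨0, Subsingleton.elim (α := ZMod 1) x y⟩
  · exact htrans k hk
end

section
/- Let f: ℤ_p → ℤ_p be continuous and define its van der Put coefficients B_m by B_m = f(m) if 0 ≤ m ≤ p-1, and B_m = f(m) - f(m - m_{n-1}p^{n-1}) if m ≥ p, where m = m_0 + ... + m_{n-1}p^{n-1} is the base-p expansion of m with m_{n-1} ≠ 0. Then f(x) = Σ_{m=0}^∞ B_m χ(m, x) for all x ∈ ℤ_p, where χ(m, x) is the characteristic function of the ball m + p^{⌊log_p m⌋ + 1}ℤ_p (with ⌊log_p 0⌋ = 0), and the series converges uniformly. -/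
open scoped Classical

/-- The van der Put basis function: characteristic function of the ball
`m + p^(⌊log_p m⌋ + 1) ℤ_p` (with `⌊log_p 0⌋ = 0`). -/
noncomputable def vdpChi (p : ℕ) [Fact p.Prime] (m : ℕ) (x : ℤ_[p]) : ℤ_[p] :=
  if (p : ℤ_[p]) ^ (Nat.log p m + 1) ∣ (x - (m : ℤ_[p])) then 1 else 0

/-!
Write `aₙ = x.appr n` for the representative of `x` modulo `pⁿ` in `[0, pⁿ)`. Among the
`m ∈ [pⁿ, pⁿ⁺¹)` only `m = aₙ₊₁` can have `χ(m, x) ≠ 0`, and for it `B_m = f(aₙ₊₁) - f(aₙ)`, so the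
partial sum of the series up to `pⁿ⁺¹` telescopes to `f(aₙ₊₁)`, which tends to `f(x)`. Uniform
continuity of `f` on the compact `ℤ_p` forces `B_m → 0`; in the ultrametric `ℤ_p` the series then
converges, with tails bounded by `sup_{m ≥ N} ‖B_m‖` uniformly in `x`.
-/

open Filter Topology Uniformity

theorem UniformContinuous.tendsto_dist_comp {α β ι : Type*} [PseudoMetricSpace α]
    [PseudoMetricSpace β] {f : α → β} (hf : UniformContinuous f) {l : Filter ι} {a b : ι → α}
    (h : Tendsto (fun i => dist (a i) (b i)) l (𝓝 0)) :
    Tendsto (fun i => dist (f (a i)) (f (b i))) l (𝓝 0) := by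
  have hab : Tendsto (fun i => (a i, b i)) l (𝓤 α) := tendsto_uniformity_iff_dist_tendsto_zero.2 h
  exact tendsto_uniformity_iff_dist_tendsto_zero.1 (Tendsto.comp hf hab)

theorem IsUltrametricDist.tendstoUniformly_sum_range {X E : Type*} [SeminormedAddCommGroup E]
    [IsUltrametricDist E] [T2Space E] {g : X → ℕ → E} {F : X → E} (hg : ∀ x, HasSum (g x) (F x))
    {c : ℕ → ℝ} (hc : Tendsto c atTop (𝓝 0)) (hgc : ∀ x m, ‖g x m‖ ≤ c m) :
    TendstoUniformly (fun N x => ∑ m ∈ Finset.range N, g x m) F atTop := by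
  rw [Metric.tendstoUniformly_iff]
  intro ε hε
  obtain ⟨M, hM⟩ := eventually_atTop.1 (hc.eventually (ge_mem_nhds (half_pos hε)))
  filter_upwards [eventually_ge_atTop M] with N hN x
  have htail : F x - ∑ m ∈ Finset.range N, g x m = ∑' m, g x (m + N) := by
    rw [← (hg x).tsum_eq, ← (hg x).summable.sum_add_tsum_nat_add N, add_sub_cancel_left]
  rw [dist_eq_norm, htail]
  refine lt_of_le_of_lt ?_ (half_lt_self hε)
  exact norm_tsum_le_of_forall_le_of_nonneg (half_pos hε).le
    fun m => (hgc x _).trans (hM _ (by omega))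

namespace PadicInt

variable {p : ℕ} [hp : Fact p.Prime]

theorem norm_le_norm_p_pow_of_dvd {z : ℤ_[p]} {k : ℕ} (h : (p : ℤ_[p]) ^ k ∣ z) :
    ‖z‖ ≤ ‖(p : ℤ_[p])‖ ^ k := by
  obtain ⟨c, rfl⟩ := h
  rw [norm_mul, norm_pow]
  exact mul_le_of_le_one_right (by positivity) (norm_le_one c)

theorem tendsto_norm_p_pow_zero : Tendsto (fun k : ℕ => ‖(p : ℤ_[p])‖ ^ k) atTop (𝓝 0) :=
  tendsto_pow_atTop_nhds_zero_of_lt_one (norm_nonneg _) ((norm_lt_one_iff_dvd (p := p) _).2 dvd_rfl)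

theorem pow_dvd_sub_appr (x : ℤ_[p]) (k : ℕ) : (p : ℤ_[p]) ^ k ∣ x - x.appr k :=
  Ideal.mem_span_singleton.1 (appr_spec k x)

theorem appr_eq_of_pow_dvd_sub {x : ℤ_[p]} {k m : ℕ} (hm : m < p ^ k)
    (h : (p : ℤ_[p]) ^ k ∣ x - (m : ℤ_[p])) : x.appr k = m := by
  have hker : toZModPow k (x - (m : ℤ_[p])) = 0 := by
    rwa [← RingHom.mem_ker, ker_toZModPow, Ideal.mem_span_singleton]
  rw [map_sub, map_natCast, sub_eq_zero] at hker
  change ((x.appr k : ℕ) : ZMod (p ^ k)) = m at hker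
  rwa [ZMod.natCast_eq_natCast_iff', Nat.mod_eq_of_lt (x.appr_lt k), Nat.mod_eq_of_lt hm] at hker

theorem pow_dvd_sub_natCast_iff {x : ℤ_[p]} {k m : ℕ} (hm : m < p ^ k) :
    (p : ℤ_[p]) ^ k ∣ x - (m : ℤ_[p]) ↔ x.appr k = m :=
  ⟨appr_eq_of_pow_dvd_sub hm, fun h => h ▸ pow_dvd_sub_appr x k⟩

theorem appr_mod_pow (x : ℤ_[p]) {k n : ℕ} (h : k ≤ n) : x.appr n % p ^ k = x.appr k :=
  Eq.trans ((Nat.modEq_iff_dvd' (x.appr_mono h)).2 (x.dvd_appr_sub_appr k n h)).symm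
    (Nat.mod_eq_of_lt (x.appr_lt k))

theorem tendsto_appr (x : ℤ_[p]) : Tendsto (fun n => (x.appr n : ℤ_[p])) atTop (𝓝 x) := by
  rw [tendsto_iff_norm_sub_tendsto_zero]
  refine squeeze_zero (fun _ => norm_nonneg _) (fun n => ?_) (tendsto_norm_p_pow_zero (p := p))
  rw [norm_sub_rev]
  exact norm_le_norm_p_pow_of_dvd (pow_dvd_sub_appr x n)

theorem pow_dvd_natCast_sub_mod (m k : ℕ) :
    (p : ℤ_[p]) ^ k ∣ (m : ℤ_[p]) - ((m % p ^ k : ℕ) : ℤ_[p]) :=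
  ⟨(m / p ^ k : ℕ), by rw [sub_eq_iff_eq_add']; exact_mod_cast (Nat.mod_add_div m (p ^ k)).symm⟩

end PadicInt

open PadicInt

section VanDerPut

variable {p : ℕ} [hp : Fact p.Prime]

theorem vdpChi_eq_ite (m : ℕ) (x : ℤ_[p]) :
    vdpChi p m x = if x.appr (Nat.log p m + 1) = m then 1 else 0 := by
  simp only [vdpChi, pow_dvd_sub_natCast_iff (Nat.lt_pow_succ_log_self hp.out.one_lt m)]

theorem norm_mul_vdpChi_le (b : ℤ_[p]) (m : ℕ) (x : ℤ_[p]) : ‖b * vdpChi p m x‖ ≤ ‖b‖ := by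
  rw [norm_mul]
  exact mul_le_of_le_one_right (norm_nonneg b) (norm_le_one _)

theorem sum_mul_vdpChi_of_log_eq (g : ℕ → ℤ_[p]) {s : Finset ℕ} {n : ℕ}
    (hs : ∀ m ∈ s, Nat.log p m = n) (x : ℤ_[p]) :
    ∑ m ∈ s, g m * vdpChi p m x = if x.appr (n + 1) ∈ s then g (x.appr (n + 1)) else 0 := by
  rw [Finset.sum_congr rfl fun m hm => by rw [vdpChi_eq_ite, hs m hm]]
  simp only [mul_ite, mul_one, mul_zero, Finset.sum_ite_eq]

theorem sum_range_pow_mul_vdpChi {f : ℤ_[p] → ℤ_[p]} {B : ℕ → ℤ_[p]}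
    (hB₁ : ∀ m : ℕ, m ≤ p - 1 → B m = f m)
    (hB₂ : ∀ m : ℕ, p ≤ m → B m = f m - f ((m % p ^ (Nat.log p m) : ℕ) : ℤ_[p]))
    (x : ℤ_[p]) (n : ℕ) :
    ∑ m ∈ Finset.range (p ^ (n + 1)), B m * vdpChi p m x = f (x.appr (n + 1)) := by
  have hp1 := hp.out.one_lt
  induction n with
  | zero =>
    have happr : x.appr 1 < p := by simpa using x.appr_lt 1
    rw [sum_mul_vdpChi_of_log_eq B (n := 0) fun m hm => Nat.log_of_lt (by simpa using hm),
      zero_add, if_pos (by simpa using happr), hB₁ _ (by omega)]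
  | succ n ih =>
    have hlog : ∀ m ∈ Finset.Ico (p ^ (n + 1)) (p ^ (n + 2)), Nat.log p m = n + 1 :=
      fun m hm => Nat.log_eq_of_pow_le_of_lt_pow (Finset.mem_Ico.1 hm).1 (Finset.mem_Ico.1 hm).2
    rw [Finset.range_eq_Ico, ← Finset.sum_Ico_consecutive _ (Nat.zero_le _)
      (Nat.pow_le_pow_right hp.out.pos (Nat.le_succ (n + 1))), ← Finset.range_eq_Ico, ih,
      sum_mul_vdpChi_of_log_eq B hlog]
    split_ifs with hmem
    · have hpm : p ≤ x.appr (n + 2) :=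
        le_trans (Nat.le_self_pow (by omega) p) (Finset.mem_Ico.1 hmem).1
      rw [hB₂ _ hpm, hlog _ hmem, x.appr_mod_pow (by omega), add_sub_cancel]
    · have hlt : x.appr (n + 2) < p ^ (n + 1) := by
        simpa [Finset.mem_Ico, x.appr_lt] using hmem
      rw [add_zero, ← x.appr_mod_pow (Nat.le_succ (n + 1)), Nat.mod_eq_of_lt hlt]

theorem tendsto_vanDerPutCoeff_zero {f : ℤ_[p] → ℤ_[p]} (hf : Continuous f) {B : ℕ → ℤ_[p]}
    (hB₂ : ∀ m : ℕ, p ≤ m → B m = f m - f ((m % p ^ (Nat.log p m) : ℕ) : ℤ_[p])) :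
    Tendsto B atTop (𝓝 0) := by
  have hlog : Tendsto (Nat.log p) atTop atTop :=
    tendsto_atTop_atTop.2 fun k => ⟨p ^ k, fun m hm => Nat.le_log_of_pow_le hp.out.one_lt hm⟩
  have hdist : Tendsto (fun m : ℕ => dist (m : ℤ_[p]) ((m % p ^ Nat.log p m : ℕ) : ℤ_[p]))
      atTop (𝓝 0) :=
    squeeze_zero (fun _ => dist_nonneg)
      (fun m => (dist_eq_norm _ _).trans_le
        (norm_le_norm_p_pow_of_dvd (pow_dvd_natCast_sub_mod _ _)))
      (tendsto_norm_p_pow_zero.comp hlog)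
  rw [tendsto_zero_iff_norm_tendsto_zero]
  refine ((CompactSpace.uniformContinuous_of_continuous hf).tendsto_dist_comp hdist).congr' ?_
  filter_upwards [eventually_ge_atTop p] with m hm
  rw [hB₂ m hm, dist_eq_norm]

theorem hasSum_mul_vdpChi {f : ℤ_[p] → ℤ_[p]} (hf : Continuous f) {B : ℕ → ℤ_[p]}
    (hB₁ : ∀ m : ℕ, m ≤ p - 1 → B m = f m)
    (hB₂ : ∀ m : ℕ, p ≤ m → B m = f m - f ((m % p ^ (Nat.log p m) : ℕ) : ℤ_[p]))
    (x : ℤ_[p]) : HasSum (fun m => B m * vdpChi p m x) (f x) := by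
  have hsum : Summable (fun m => B m * vdpChi p m x) := by
    refine NonarchimedeanAddGroup.summable_of_tendsto_cofinite_zero ?_
    rw [Nat.cofinite_eq_atTop]
    exact squeeze_zero_norm (fun m => norm_mul_vdpChi_le (B m) m x)
      (tendsto_zero_iff_norm_tendsto_zero.1 (tendsto_vanDerPutCoeff_zero hf hB₂))
  have hpow : Tendsto (fun n => p ^ (n + 1)) atTop atTop :=
    (tendsto_pow_atTop_atTop_of_one_lt hp.out.one_lt).comp (tendsto_add_atTop_nat 1)
  have hlim : Tendsto (fun n => f (x.appr (n + 1))) atTop (𝓝 (f x)) :=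
    (hf.tendsto x).comp ((tendsto_appr x).comp (tendsto_add_atTop_nat 1))
  convert hsum.hasSum
  refine tendsto_nhds_unique hlim ((hsum.hasSum.tendsto_sum_nat.comp hpow).congr fun n => ?_)
  exact sum_range_pow_mul_vdpChi hB₁ hB₂ x n

end VanDerPut

theorem vanDerPut_expansion (p : ℕ) [Fact p.Prime]
    (f : ℤ_[p] → ℤ_[p]) (hf : Continuous f) (B : ℕ → ℤ_[p])
    (hB₁ : ∀ m : ℕ, m ≤ p - 1 → B m = f m)
    (hB₂ : ∀ m : ℕ, p ≤ m → B m = f m - f ((m % p ^ (Nat.log p m) : ℕ) : ℤ_[p])) :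
    (∀ x : ℤ_[p], HasSum (fun m : ℕ => B m * vdpChi p m x) (f x)) ∧
    TendstoUniformly
      (fun (N : ℕ) (x : ℤ_[p]) => ∑ m ∈ Finset.range N, B m * vdpChi p m x)
      f Filter.atTop :=
  ⟨hasSum_mul_vdpChi hf hB₁ hB₂,
    IsUltrametricDist.tendstoUniformly_sum_range (hasSum_mul_vdpChi hf hB₁ hB₂)
      (tendsto_zero_iff_norm_tendsto_zero.1 (tendsto_vanDerPutCoeff_zero hf hB₂))
      fun x m => norm_mul_vdpChi_le (B m) m x⟩
end

section
/- A continuous function f: ℤ_p → ℤ_p with van der Put coefficients B_m is 1-Lipschitz if and only if |B_m|_p ≤ p^{-⌊log_p m⌋} for all m ≥ 0; equivalently, if and only if f can be written as f(x) = Σ_{m=0}^∞ p^{⌊log_p m⌋} b_m χ(m, x) for suitable b_m ∈ ℤ_p. -/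
open scoped Classical

variable {p : ℕ} [Fact p.Prime]

lemma dvd_iff_norm_le (z : ℤ_[p]) (n : ℕ) :
    (p:ℤ_[p])^n ∣ z ↔ ‖z‖ ≤ (p:ℝ) ^ (-n : ℤ) := by
  rw [PadicInt.norm_le_pow_iff_mem_span_pow, Ideal.mem_span_singleton]

lemma vdpChi_natCast (k n : ℕ) :
    vdpChi p k (n : ℤ_[p]) = if n % p ^ (Nat.log p k + 1) = k then 1 else 0 := by
  have hp : 1 < p := (Fact.out : p.Prime).one_lt
  have hk : k < p ^ (Nat.log p k + 1) := Nat.lt_pow_succ_log_self hp k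
  have h1 : ((n : ℤ_[p]) - (k : ℤ_[p])) = (((n : ℤ) - (k : ℤ) : ℤ) : ℤ_[p]) := by push_cast; ring
  have h2 : ((p:ℤ))^(Nat.log p k + 1) ∣ (n:ℤ) - (k:ℤ) ↔ n % p^(Nat.log p k + 1) = k := by
    rw [show ((p:ℤ))^(Nat.log p k + 1) = ((p^(Nat.log p k + 1):ℕ):ℤ) by push_cast; ring,
      ← Nat.modEq_iff_dvd, Nat.ModEq, Nat.mod_eq_of_lt hk, eq_comm]
  rw [vdpChi, h1, PadicInt.pow_p_dvd_int_iff]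
  simp only [h2]

lemma vdpChi_self (m : ℕ) : vdpChi p m (m : ℤ_[p]) = 1 := by
  have hp : 1 < p := (Fact.out : p.Prime).one_lt
  rw [vdpChi_natCast, if_pos (Nat.mod_eq_of_lt (Nat.lt_pow_succ_log_self hp m))]

lemma vdpChi_trunc (m k : ℕ) (hs : 1 ≤ Nat.log p m) (hk : k ≠ m) :
    vdpChi p k ((m % p ^ Nat.log p m : ℕ) : ℤ_[p]) = vdpChi p k (m : ℤ_[p]) := by
  have hp : 1 < p := (Fact.out : p.Prime).one_lt
  set s := Nat.log p m with hsdef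
  set L := Nat.log p k with hLdef
  rw [vdpChi_natCast, vdpChi_natCast]
  rcases le_or_gt (L + 1) s with h | h
  · rw [Nat.mod_mod_of_dvd _ (pow_dvd_pow p h)]
  · have hLs : s ≤ L := Nat.lt_succ_iff.mp h
    have hm : m < p ^ (L + 1) :=
      lt_of_lt_of_le (Nat.lt_pow_succ_log_self hp m) (Nat.pow_le_pow_right hp.le (by omega))
    have hm' : m % p ^ s < p ^ (L + 1) :=
      lt_of_lt_of_le (Nat.mod_lt m (pow_pos (by omega) s))
        (Nat.pow_le_pow_right hp.le (by omega))
    rw [Nat.mod_eq_of_lt hm, Nat.mod_eq_of_lt hm', if_neg (Ne.symm hk), if_neg]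
    intro hcon
    have hk0 : k ≠ 0 := by rintro rfl; simp [hLdef] at hLs; omega
    have : p ^ L ≤ k := Nat.pow_log_le_self p hk0
    have : p ^ s ≤ k := le_trans (Nat.pow_le_pow_right hp.le hLs) this
    have := Nat.mod_lt m (show 0 < p ^ s from pow_pos (by omega) s)
    omega

lemma vdpChi_trunc_self (m : ℕ) (hs : 1 ≤ Nat.log p m) :
    vdpChi p m ((m % p ^ Nat.log p m : ℕ) : ℤ_[p]) = 0 := by
  have hp : 1 < p := (Fact.out : p.Prime).one_lt
  have h1 : m % p ^ Nat.log p m < p ^ Nat.log p m := Nat.mod_lt m (pow_pos (by omega) _)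
  have h2 : p ^ Nat.log p m ≤ m := Nat.pow_log_le_self p (by
    rintro rfl; simp at hs)
  rw [vdpChi_natCast, if_neg]
  rw [Nat.mod_eq_of_lt (h1.trans_le (Nat.pow_le_pow_right hp.le (by omega)))]
  omega

/-- Key uniqueness: the `m`-th coefficient is determined by `g`. -/
lemma coeff_eq (C : ℕ → ℤ_[p]) (g : ℤ_[p] → ℤ_[p])
    (hC : ∀ x, HasSum (fun k => C k * vdpChi p k x) (g x)) (m : ℕ) (hs : 1 ≤ Nat.log p m) :
    C m = g m - g ((m % p ^ Nat.log p m : ℕ) : ℤ_[p]) := by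
  have h1 := (hC m).sub (hC ((m % p ^ Nat.log p m : ℕ) : ℤ_[p]))
  have h2 : (fun k => C k * vdpChi p k (m : ℤ_[p])
      - C k * vdpChi p k ((m % p ^ Nat.log p m : ℕ) : ℤ_[p]))
      = fun k => if k = m then C m else 0 := by
    funext k
    by_cases hk : k = m
    · subst hk; rw [vdpChi_self, vdpChi_trunc_self _ hs]; simp
    · rw [vdpChi_trunc m k hs hk, if_neg hk]; ring
  rw [h2] at h1
  exact (hasSum_ite_eq m (C m)).unique h1


theorem oneLipschitz_iff_vanDerPut_coeffs (p : ℕ) [Fact p.Prime]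
    (f : ℤ_[p] → ℤ_[p]) (hf : Continuous f) (B : ℕ → ℤ_[p])
    (hB : ∀ x : ℤ_[p], HasSum (fun m : ℕ => B m * vdpChi p m x) (f x)) :
    ((∀ x y : ℤ_[p], ‖f x - f y‖ ≤ ‖x - y‖) ↔
      ∀ m : ℕ, ‖B m‖ ≤ (p : ℝ) ^ (-(Nat.log p m : ℤ))) ∧
    ((∀ x y : ℤ_[p], ‖f x - f y‖ ≤ ‖x - y‖) ↔
      ∃ b : ℕ → ℤ_[p], ∀ x : ℤ_[p],
        HasSum (fun m : ℕ => (p : ℤ_[p]) ^ (Nat.log p m) * b m * vdpChi p m x) (f x)) := by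
  have dir1 : (∀ x y : ℤ_[p], ‖f x - f y‖ ≤ ‖x - y‖) →
      ∀ m : ℕ, ‖B m‖ ≤ (p : ℝ) ^ (-(Nat.log p m : ℤ)) := by
    intro hL m
    rcases Nat.eq_zero_or_pos (Nat.log p m) with h0 | h1
    · rw [h0]; simpa using PadicInt.norm_le_one (B m)
    · rw [coeff_eq B f hB m h1]
      refine le_trans (hL _ _) ?_
      rw [← dvd_iff_norm_le]
      have hq : ((m : ℕ) : ℤ_[p]) = (p : ℤ_[p]) ^ Nat.log p m
          * ((m / p ^ Nat.log p m : ℕ) : ℤ_[p]) + ((m % p ^ Nat.log p m : ℕ) : ℤ_[p]) := by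
        exact_mod_cast congrArg (Nat.cast : ℕ → ℤ_[p]) (Nat.div_add_mod m (p ^ Nat.log p m)).symm
      exact ⟨((m / p ^ Nat.log p m : ℕ) : ℤ_[p]), by rw [hq]; ring⟩
  have dir2 : (∀ m : ℕ, ‖B m‖ ≤ (p : ℝ) ^ (-(Nat.log p m : ℤ))) →
      ∀ x y : ℤ_[p], ‖f x - f y‖ ≤ ‖x - y‖ := by
    intro hb x y
    have hsum : HasSum (fun m => B m * (vdpChi p m x - vdpChi p m y)) (f x - f y) := by
      have := (hB x).sub (hB y); simpa [mul_sub] using this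
    rw [← hsum.tsum_eq]
    refine IsUltrametricDist.norm_tsum_le_of_forall_le_of_nonneg (norm_nonneg _) fun m => ?_
    by_cases hd : (p : ℤ_[p]) ^ (Nat.log p m + 1) ∣ x - y
    · have hchi : vdpChi p m x = vdpChi p m y := by
        unfold vdpChi
        have hxy : x - (m : ℤ_[p]) = (y - (m : ℤ_[p])) + (x - y) := by ring
        by_cases h : (p : ℤ_[p]) ^ (Nat.log p m + 1) ∣ y - (m : ℤ_[p])
        · rw [if_pos h, if_pos (hxy ▸ dvd_add h hd)]
        · rw [if_neg h, if_neg (fun hc => h (by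
            have : y - (m : ℤ_[p]) = (x - (m : ℤ_[p])) - (x - y) := by ring
            exact this ▸ dvd_sub hc hd))]
      simp [hchi]
    · have h1 : ¬ ‖x - y‖ ≤ (p : ℝ) ^ (-(Nat.log p m + 1 : ℕ) : ℤ) :=
        fun h => hd ((dvd_iff_norm_le _ _).mpr h)
      have h2 : (p : ℝ) ^ (-(Nat.log p m : ℤ)) ≤ ‖x - y‖ := by
        by_contra hcon
        push_neg at hcon
        rw [PadicInt.norm_lt_pow_iff_norm_le_pow_sub_one] at hcon
        exact h1 (by convert hcon using 2; push_cast; ring)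
      calc ‖B m * (vdpChi p m x - vdpChi p m y)‖
          ≤ ‖B m‖ * ‖vdpChi p m x - vdpChi p m y‖ := norm_mul_le _ _
        _ ≤ (p : ℝ) ^ (-(Nat.log p m : ℤ)) * 1 :=
            mul_le_mul (hb m) (PadicInt.norm_le_one _) (norm_nonneg _)
              (by positivity)
        _ ≤ ‖x - y‖ := by rw [mul_one]; exact h2
  have dir3 : (∀ m : ℕ, ‖B m‖ ≤ (p : ℝ) ^ (-(Nat.log p m : ℤ))) ↔
      (∃ b : ℕ → ℤ_[p], ∀ x : ℤ_[p],
        HasSum (fun m : ℕ => (p : ℤ_[p]) ^ (Nat.log p m) * b m * vdpChi p m x) (f x)) := by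
    constructor
    · intro hb
      have hd : ∀ m, ∃ c, B m = (p : ℤ_[p]) ^ (Nat.log p m) * c :=
        fun m => (dvd_iff_norm_le _ _).mpr (hb m)
      choose b hbm using hd
      refine ⟨b, fun x => ?_⟩
      have h := hB x
      have he : (fun m : ℕ => B m * vdpChi p m x)
          = fun m : ℕ => (p : ℤ_[p]) ^ (Nat.log p m) * b m * vdpChi p m x := by
        funext m; rw [← hbm m]
      rwa [he] at h
    · rintro ⟨b, hbsum⟩ m
      rcases Nat.eq_zero_or_pos (Nat.log p m) with h0 | h1
      · rw [h0]; simpa using PadicInt.norm_le_one (B m)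
      · have e1 := coeff_eq B f hB m h1
        have e2 := coeff_eq (fun k => (p : ℤ_[p]) ^ (Nat.log p k) * b k) f hbsum m h1
        rw [e1, ← e2]
        calc ‖(p : ℤ_[p]) ^ (Nat.log p m) * b m‖
            ≤ ‖(p : ℤ_[p]) ^ (Nat.log p m)‖ * ‖b m‖ := norm_mul_le _ _
          _ ≤ (p : ℝ) ^ (-(Nat.log p m : ℤ)) * 1 := by
              rw [PadicInt.norm_p_pow]
              exact mul_le_mul_of_nonneg_left (PadicInt.norm_le_one _) (by positivity)
          _ = (p : ℝ) ^ (-(Nat.log p m : ℤ)) := mul_one _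
  exact ⟨⟨dir1, dir2⟩, ⟨fun h => dir3.mp (dir1 h), fun h => dir2 (dir3.mpr h)⟩⟩
end

section
/- Let g: ℤ_2 → ℤ_2 be 1-Lipschitz with van der Put coefficients B_m of the form B_m = 2^{⌊log_2 m⌋} b_m, and let f be 1-Lipschitz on ℤ_2 with f(a + 2^r + 2^{r+1}x) = f(a + 2^r) + 2^{r+1} g(x), f having rescaled van der Put coefficients b_f. Then for m ≥ 2 with n = ⌊log_2 m⌋: b_m = b_f(a + 2^r + m·2^{r+1}). -/
theorem vanDerPut_coeffs_of_conjugate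
    (f g : ℤ_[2] → ℤ_[2])
    (hf : ∀ x y : ℤ_[2], ‖f x - f y‖ ≤ ‖x - y‖)
    (hg : ∀ x y : ℤ_[2], ‖g x - g y‖ ≤ ‖x - y‖)
    (r : ℕ) (hr : 1 ≤ r) (a : ℕ) (ha : a < 2 ^ r)
    (hconj : ∀ x : ℤ_[2],
      f ((a : ℤ_[2]) + 2 ^ r + 2 ^ (r + 1) * x) = f ((a : ℤ_[2]) + 2 ^ r) + 2 ^ (r + 1) * g x)
    (b bf : ℕ → ℤ_[2])
    (hb : ∀ m : ℕ, 2 ≤ m →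
      (2 : ℤ_[2]) ^ (Nat.log 2 m) * b m =
        g (m : ℤ_[2]) - g ((m - 2 ^ (Nat.log 2 m) : ℕ) : ℤ_[2]))
    (hbf : ∀ m : ℕ, 2 ≤ m →
      (2 : ℤ_[2]) ^ (Nat.log 2 m) * bf m =
        f (m : ℤ_[2]) - f ((m - 2 ^ (Nat.log 2 m) : ℕ) : ℤ_[2])) :
    ∀ m : ℕ, 2 ≤ m → b m = bf (a + 2 ^ r + m * 2 ^ (r + 1)) := by
  intro m hm
  set n := Nat.log 2 m with hn
  have hmn : 2 ^ n ≤ m := Nat.pow_log_le_self 2 (by omega)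
  have hmn' : m < 2 ^ (n + 1) := Nat.lt_pow_succ_log_self (by norm_num) m
  set M := a + 2 ^ r + m * 2 ^ (r + 1) with hM
  have hpow : 2 ^ (n + r + 1) = 2 ^ n * 2 ^ (r + 1) := by ring
  have har : a + 2 ^ r < 2 ^ (r + 1) := by
    have : 2 ^ (r + 1) = 2 ^ r * 2 := by ring
    omega
  have hlogM : Nat.log 2 M = n + r + 1 := by
    apply Nat.log_eq_of_pow_le_of_lt_pow
    · calc 2 ^ (n + r + 1) = 2 ^ n * 2 ^ (r + 1) := hpow
        _ ≤ m * 2 ^ (r + 1) := Nat.mul_le_mul_right _ hmn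
        _ ≤ M := by omega
    · calc M < (m + 1) * 2 ^ (r + 1) := by
            have : (m + 1) * 2 ^ (r + 1) = m * 2 ^ (r + 1) + 2 ^ (r + 1) := by ring
            omega
        _ ≤ 2 ^ (n + 1) * 2 ^ (r + 1) := Nat.mul_le_mul_right _ (by omega)
        _ = 2 ^ (n + r + 1 + 1) := by ring
  have hMsub : M - 2 ^ (n + r + 1) = a + 2 ^ r + (m - 2 ^ n) * 2 ^ (r + 1) := by
    have h4 : (m - 2 ^ n) * 2 ^ (r + 1) = m * 2 ^ (r + 1) - 2 ^ n * 2 ^ (r + 1) :=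
      Nat.sub_mul _ _ _
    have h5 : 2 ^ n * 2 ^ (r + 1) ≤ m * 2 ^ (r + 1) := Nat.mul_le_mul_right _ hmn
    omega
  have h2M : 2 ≤ M := by
    have : 2 ≤ 2 ^ r := by
      calc 2 = 2 ^ 1 := rfl
        _ ≤ 2 ^ r := Nat.pow_le_pow_right (by norm_num) hr
    omega
  have key := hbf M h2M
  rw [hlogM, hMsub] at key
  have hcastM : ((M : ℕ) : ℤ_[2]) = (a : ℤ_[2]) + 2 ^ r + 2 ^ (r + 1) * (m : ℤ_[2]) := by
    rw [hM]; push_cast; ring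
  have hcastM' : ((a + 2 ^ r + (m - 2 ^ n) * 2 ^ (r + 1) : ℕ) : ℤ_[2]) =
      (a : ℤ_[2]) + 2 ^ r + 2 ^ (r + 1) * ((m - 2 ^ n : ℕ) : ℤ_[2]) := by
    push_cast; ring
  rw [hcastM, hcastM', hconj, hconj] at key
  have key2 : (2 : ℤ_[2]) ^ (n + r + 1) * bf M =
      2 ^ (r + 1) * ((2 : ℤ_[2]) ^ n * b m) := by
    rw [hb m hm, key]; ring
  have hfinal : (2 : ℤ_[2]) ^ (n + r + 1) * bf M = (2 : ℤ_[2]) ^ (n + r + 1) * b m := by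
    rw [key2]; ring
  have h2ne : (2 : ℤ_[2]) ^ (n + r + 1) ≠ 0 := pow_ne_zero _ (by norm_num)
  exact (mul_left_cancel₀ h2ne hfinal).symm
end
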